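/- arXiv:0705.2267 — 6 statements merged into one kernel-verified Lean document; each statement's English description precedes it below -/
import Mathlib

section
/- For every integer m ≥ 2, one has 2·ζ(m,1) = m·ζ(m+1) − Σ_{j=1}^{m−2} ζ(j+1)·ζ(m−j), where ζ(m,1) = Σ_{k>l≥1} 1/(k^m · l) and ζ(s) is the Riemann zeta value. -/
/-!
Expanding `ζ(a) ζ(b)` over the three regions `k > l`, `k < l`, `k = l` of pairs of positive
integers gives the stuffle relation `ζ(a) ζ(b) = ζ(a, b) + ζ(b, a) + ζ(a + b)`.

For the sum formula `∑_{a + b = n + 2, a ≥ 2, b ≥ 1} ζ(a, b) = ζ(n + 2)`, sum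
`T = ∑_{D, L ≥ 1} 1 / (D (D + L) L^n)` in two ways. Expanding `1 / (D (D + L) L^n)` in partial
fractions in powers of `D + L` gives `T = ∑_{a + b = n + 2} ζ(a, b) + ζ(n + 1, 1)`, while summing
over `D` first telescopes, `∑_D 1 / (D (D + L)) = H_L / L`, so that
`T = ∑_L H_L / L^(n + 1) = ζ(n + 1, 1) + ζ(n + 2)`.

In Euler's formula, the stuffle relations for the products `ζ(j + 1) ζ(m - j)` contribute every
`ζ(a, b)` with `a + b = m + 1`, `a, b ≥ 2` twice, plus `(m - 2) ζ(m + 1)`; by the sum formula of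
weight `m + 1` those `ζ(a, b)` add up to `ζ(m + 1) - ζ(m, 1)`.
-/

/-- The Riemann zeta value ζ(s) = ∑_{k ≥ 1} 1/k^s (s a natural number). -/
noncomputable def zeta (s : ℕ) : ℝ := ∑' k : ℕ, (((k : ℝ) + 1) ^ s)⁻¹

/-- The double zeta value ζ(s₁, s₂) = ∑_{k > l ≥ 1} 1/(k^{s₁} l^{s₂}). -/
noncomputable def zeta2 (s₁ s₂ : ℕ) : ℝ :=
  ∑' k : ℕ, ∑' l : ℕ, if 1 ≤ l ∧ l < k then ((k : ℝ) ^ s₁ * (l : ℝ) ^ s₂)⁻¹ else 0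

open Finset Filter Topology

lemma summable_inv_succ_rpow {p : ℝ} (hp : 1 < p) :
    Summable fun k : ℕ => (((k : ℝ) + 1) ^ p)⁻¹ := by
  simpa using (summable_nat_add_iff 1).2 (Real.summable_nat_rpow_inv.2 hp)

lemma hasSum_sub_succ_of_antitone {u : ℕ → ℝ} (hu : Antitone u) (h : Tendsto u atTop (𝓝 0)) :
    HasSum (fun n => u n - u (n + 1)) (u 0) := by
  refine (hasSum_iff_tendsto_nat_of_nonneg (fun n => sub_nonneg.2 (hu n.le_succ)) _).2 ?_
  simp_rw [sum_range_sub']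
  simpa using h.const_sub (u 0)

lemma hasSum_sub_add_of_antitone {u : ℕ → ℝ} (hu : Antitone u) (h : Tendsto u atTop (𝓝 0))
    (c : ℕ) : HasSum (fun n => u n - u (n + c)) (∑ i ∈ range c, u i) := by
  induction c with
  | zero => simp
  | succ c ih =>
    have hc := hasSum_sub_succ_of_antitone (hu.comp_monotone (monotone_id.add_const c))
      (h.comp (tendsto_add_atTop_nat c))
    rw [sum_range_succ]
    convert ih.add hc using 1
    · funext n
      simp only [Function.comp_apply, id]
      rw [show n + 1 + c = n + (c + 1) by ring]
      ring
    · simp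

lemma hasSum_inv_sub_inv_add_harmonic (c : ℕ) :
    HasSum (fun d : ℕ => ((d : ℝ) + 1)⁻¹ - ((d : ℝ) + c + 1)⁻¹) (harmonic c) := by
  have hu : Antitone fun d : ℕ => ((d : ℝ) + 1)⁻¹ := fun i j hij =>
    inv_anti₀ (by positivity) (by simpa using hij)
  have h := hasSum_sub_add_of_antitone hu
    (by simpa [one_div] using (tendsto_one_div_add_atTop_nhds_zero_nat (𝕜 := ℝ))) c
  have hc : ((harmonic c : ℚ) : ℝ) = ∑ i ∈ range c, ((i : ℝ) + 1)⁻¹ := by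
    simp [harmonic]
  simpa only [hc, Nat.cast_add, add_right_comm] using h

lemma mul_rpow_three_halves_le {x y : ℝ} (hx : 0 ≤ x) (hy : 0 ≤ y) :
    (x * y) ^ (3 / 2 : ℝ) ≤ x * y * (x + y) := by
  have hsqrt : (x * y) ^ (1 / 2 : ℝ) ≤ x + y := by
    rw [← Real.sqrt_eq_rpow, Real.sqrt_le_iff]
    constructor <;> nlinarith [mul_nonneg hx hy]
  calc (x * y) ^ (3 / 2 : ℝ) = x * y * (x * y) ^ (1 / 2 : ℝ) := by
        rw [show (3 / 2 : ℝ) = 1 + 1 / 2 by norm_num,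
          Real.rpow_add' (by positivity) (by norm_num), Real.rpow_one]
    _ ≤ x * y * (x + y) := mul_le_mul_of_nonneg_left hsqrt (by positivity)

lemma inv_mul_add_mul_pow_eq_sum {K : Type*} [Field K] {x y : K} (hx : x ≠ 0) (hy : y ≠ 0)
    (hxy : x + y ≠ 0) (n : ℕ) :
    (x * (x + y) * y ^ n)⁻¹
      = ∑ i ∈ range n, ((x + y) ^ (i + 2) * y ^ (n - i))⁻¹ + (x * (x + y) ^ (n + 1))⁻¹ := by
  induction n with
  | zero => simp
  | succ n ih =>
    have hsum : ∑ i ∈ range (n + 1), ((x + y) ^ (i + 2) * y ^ (n + 1 - i))⁻¹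
        = (∑ i ∈ range n, ((x + y) ^ (i + 2) * y ^ (n - i))⁻¹) * (x + y)⁻¹
          + ((x + y) ^ 2 * y ^ (n + 1))⁻¹ := by
      rw [sum_range_succ', sum_mul]
      congr 1
      refine sum_congr rfl fun i _ => ?_
      rw [Nat.add_sub_add_right, ← mul_inv, pow_succ]
      ring
    rw [hsum, eq_sub_of_add_eq ih.symm]
    field_simp
    ring

lemma hasSum_zeta {s : ℕ} (hs : 2 ≤ s) :
    HasSum (fun k : ℕ => (((k : ℝ) + 1) ^ s)⁻¹) (zeta s) := by
  have := summable_inv_succ_rpow (p := s) (by exact_mod_cast hs)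
  simp only [Real.rpow_natCast] at this
  exact this.hasSum

/-- `p = (l, d)` stands for the pair `k = l + d + 2 > l + 1` of the double zeta sum. -/
noncomputable def doubleZetaTerm (a b : ℕ) (p : ℕ × ℕ) : ℝ :=
  (((p.1 : ℝ) + p.2 + 2) ^ a * ((p.1 : ℝ) + 1) ^ b)⁻¹

/-- `1 / (D (D + L) L^n)` with `D = d + 1`, `L = l + 1` for `p = (l, d)`. -/
noncomputable def sumFormulaTerm (n : ℕ) (p : ℕ × ℕ) : ℝ :=
  (((p.2 : ℝ) + 1) * ((p.1 : ℝ) + p.2 + 2) * ((p.1 : ℝ) + 1) ^ n)⁻¹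

lemma doubleZetaTerm_nonneg (a b : ℕ) (p : ℕ × ℕ) : 0 ≤ doubleZetaTerm a b p := by
  unfold doubleZetaTerm; positivity

lemma sumFormulaTerm_eq (n : ℕ) (p : ℕ × ℕ) :
    sumFormulaTerm n p
      = ∑ i ∈ range n, doubleZetaTerm (i + 2) (n - i) p + doubleZetaTerm (n + 1) 1 p.swap := by
  obtain ⟨l, d⟩ := p
  have h := inv_mul_add_mul_pow_eq_sum (x := (d : ℝ) + 1) (y := (l : ℝ) + 1) (by positivity)
    (by positivity) (by positivity) n
  rw [show (d : ℝ) + 1 + ((l : ℝ) + 1) = l + d + 2 by ring] at h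
  simp only [sumFormulaTerm, doubleZetaTerm, Prod.swap, h]
  congr 2
  ring

lemma summable_sumFormulaTerm {n : ℕ} (hn : 1 ≤ n) : Summable (sumFormulaTerm n) := by
  have h := summable_inv_succ_rpow (p := 3 / 2) (by norm_num)
  refine Summable.of_nonneg_of_le (fun p => by unfold sumFormulaTerm; positivity) (fun p => ?_)
    (h.mul_of_nonneg h (fun _ => by positivity) (fun _ => by positivity))
  obtain ⟨l, d⟩ := p
  simp only [sumFormulaTerm]
  rw [← mul_inv, ← Real.mul_rpow (by positivity) (by positivity)]
  apply inv_anti₀ (by positivity)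
  calc (((l : ℝ) + 1) * ((d : ℝ) + 1)) ^ (3 / 2 : ℝ)
      ≤ ((l : ℝ) + 1) * ((d : ℝ) + 1) * (((l : ℝ) + 1) + ((d : ℝ) + 1)) :=
        mul_rpow_three_halves_le (by positivity) (by positivity)
    _ = ((d : ℝ) + 1) * ((l : ℝ) + d + 2) * ((l : ℝ) + 1) := by ring
    _ ≤ ((d : ℝ) + 1) * ((l : ℝ) + d + 2) * ((l : ℝ) + 1) ^ n := by
        gcongr
        exact le_self_pow₀ (by linarith [(l.cast_nonneg : (0 : ℝ) ≤ l)]) (by omega)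

lemma summable_doubleZetaTerm {a b : ℕ} (ha : 2 ≤ a) (hb : 1 ≤ b) :
    Summable (doubleZetaTerm a b) := by
  obtain ⟨i, rfl⟩ : ∃ i, a = i + 2 := ⟨a - 2, by omega⟩
  refine (summable_sumFormulaTerm (n := i + b) (by omega)).of_nonneg_of_le
    (doubleZetaTerm_nonneg _ _) (fun p => ?_)
  have hle := single_le_sum (f := fun j => doubleZetaTerm (j + 2) (i + b - j) p)
    (fun j _ => doubleZetaTerm_nonneg _ _ _) (mem_range.2 (by omega : i < i + b))
  rw [Nat.add_sub_cancel_left] at hle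
  rw [sumFormulaTerm_eq]
  linarith [doubleZetaTerm_nonneg (i + b + 1) 1 p.swap]

lemma hasSum_doubleZetaTerm {a b : ℕ} (ha : 2 ≤ a) (hb : 1 ≤ b) :
    HasSum (doubleZetaTerm a b) (zeta2 a b) := by
  set F : ℕ × ℕ → ℝ := fun p =>
    if 1 ≤ p.2 ∧ p.2 < p.1 then ((p.1 : ℝ) ^ a * (p.2 : ℝ) ^ b)⁻¹ else 0
  set g : ℕ × ℕ → ℕ × ℕ := fun p => (p.1 + p.2 + 2, p.1 + 1)
  have hg : Function.Injective g := fun p q h => by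
    simp only [g, Prod.mk.injEq] at h
    ext <;> omega
  have hF : ∀ x ∉ Set.range g, F x = 0 := fun ⟨k, l⟩ hx => if_neg fun h =>
    hx ⟨(l - 1, k - l - 1), by simp only [g, Prod.mk.injEq]; omega⟩
  have hFg : F ∘ g = doubleZetaTerm a b := by
    funext ⟨l, d⟩
    simp only [F, g, Function.comp_apply, doubleZetaTerm]
    rw [if_pos (by omega)]
    push_cast
    ring
  have hV := summable_doubleZetaTerm ha hb
  have hFs : Summable F := (hg.summable_iff hF).1 (hFg ▸ hV)
  have hzeta2 : zeta2 a b = ∑' p, F p := (hFs.tsum_prod' hFs.prod_factor).symm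
  rw [hzeta2, ← hg.tsum_eq (Function.support_subset_iff'.2 hF)]
  exact hFg ▸ hV.hasSum

lemma zeta2_one_eq_tsum_harmonic (s : ℕ) :
    zeta2 s 1 = ∑' k : ℕ, (((k : ℝ) + 1) ^ s)⁻¹ * harmonic k := by
  set f : ℕ → ℕ → ℝ := fun k l => if 1 ≤ l ∧ l < k then ((k : ℝ) ^ s * (l : ℝ) ^ 1)⁻¹ else 0
  have hinner : ∀ k, ∑' l, f (k + 1) l = (((k : ℝ) + 1) ^ s)⁻¹ * harmonic k := by
    intro k
    rw [tsum_eq_sum (s := Icc 1 k) fun l hl => if_neg (by rw [mem_Icc] at hl; omega),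
      harmonic_eq_sum_Icc, Rat.cast_sum, mul_sum]
    refine sum_congr rfl fun l hl => ?_
    rw [if_pos (by rw [mem_Icc] at hl; omega), pow_one, mul_inv]
    push_cast
    rfl
  show ∑' k, ∑' l, f k l = _
  rw [← Nat.succ_injective.tsum_eq (f := fun k => ∑' l, f k l)]
  · exact tsum_congr hinner
  · rintro (_ | k) hk
    · simp [f] at hk
    · exact ⟨k, rfl⟩

lemma hasSum_sumFormulaTerm_fiber (n l : ℕ) :
    HasSum (fun d => sumFormulaTerm n (l, d)) ((((l : ℝ) + 1) ^ (n + 1))⁻¹ * harmonic (l + 1)) :=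
  ((hasSum_inv_sub_inv_add_harmonic (l + 1)).mul_left _).congr_fun fun d => by
    simp only [sumFormulaTerm]
    push_cast
    field_simp
    ring

lemma hasSum_sumFormulaTerm_zeta2_add_zeta {n : ℕ} (hn : 1 ≤ n) :
    HasSum (sumFormulaTerm n) (zeta2 (n + 1) 1 + zeta (n + 2)) := by
  have hT := summable_sumFormulaTerm hn
  have hfib := hT.hasSum.prod_fiberwise (hasSum_sumFormulaTerm_fiber n)
  have hH : HasSum (fun l : ℕ => (((l : ℝ) + 1) ^ (n + 1))⁻¹ * harmonic l)
      (∑' p, sumFormulaTerm n p - zeta (n + 2)) :=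
    (hfib.sub (hasSum_zeta (by omega))).congr_fun fun l => by
      rw [harmonic_succ, pow_succ _ (n + 1), mul_inv]
      push_cast
      ring
  rw [zeta2_one_eq_tsum_harmonic, hH.tsum_eq, sub_add_cancel]
  exact hT.hasSum

lemma hasSum_sumFormulaTerm_sum_zeta2 {n : ℕ} (hn : 1 ≤ n) :
    HasSum (sumFormulaTerm n) (∑ i ∈ range n, zeta2 (i + 2) (n - i) + zeta2 (n + 1) 1) := by
  have hswap : HasSum (fun p : ℕ × ℕ => doubleZetaTerm (n + 1) 1 p.swap) (zeta2 (n + 1) 1) :=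
    (Equiv.prodComm ℕ ℕ).hasSum_iff.2 (hasSum_doubleZetaTerm (by omega) le_rfl)
  have hpieces := hasSum_sum (s := range n) fun i hi =>
    hasSum_doubleZetaTerm (a := i + 2) (b := n - i) (by omega) (by have := mem_range.1 hi; omega)
  exact (hpieces.add hswap).congr_fun (sumFormulaTerm_eq n)

theorem sum_range_zeta2_eq_zeta {n : ℕ} (hn : 1 ≤ n) :
    ∑ i ∈ range n, zeta2 (i + 2) (n - i) = zeta (n + 2) := by
  have := (hasSum_sumFormulaTerm_sum_zeta2 hn).unique (hasSum_sumFormulaTerm_zeta2_add_zeta hn)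
  linarith

def stuffleIndex : (ℕ × ℕ) ⊕ (ℕ × ℕ) ⊕ ℕ → ℕ × ℕ
  | .inl (l, d) => (l + d + 1, l)
  | .inr (.inl (l, d)) => (l, l + d + 1)
  | .inr (.inr k) => (k, k)

lemma stuffleIndex_bijective : Function.Bijective stuffleIndex := by
  constructor
  · rintro (⟨l, d⟩ | ⟨l, d⟩ | k) (⟨l', d'⟩ | ⟨l', d'⟩ | k') h <;>
      simp only [stuffleIndex, Prod.mk.injEq, Sum.inl.injEq, Sum.inr.injEq, reduceCtorEq]
        at h ⊢ <;>
      omega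
  · rintro ⟨x, y⟩
    rcases lt_trichotomy y x with h | rfl | h
    · exact ⟨.inl (y, x - y - 1), by simp only [stuffleIndex, Prod.mk.injEq, and_true]; omega⟩
    · exact ⟨.inr (.inr y), rfl⟩
    · exact ⟨.inr (.inl (x, y - x - 1)), by
        simp only [stuffleIndex, Prod.mk.injEq, true_and]; omega⟩

theorem zeta_mul_zeta {a b : ℕ} (ha : 2 ≤ a) (hb : 2 ≤ b) :
    zeta a * zeta b = zeta2 a b + zeta2 b a + zeta (a + b) := by
  have hprod := (hasSum_zeta ha).mul (hasSum_zeta hb)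
    ((hasSum_zeta ha).summable.mul_of_nonneg (hasSum_zeta hb).summable
      (fun _ => by positivity) (fun _ => by positivity))
  rw [← (Equiv.ofBijective _ stuffleIndex_bijective).hasSum_iff] at hprod
  refine hprod.unique ?_
  rw [add_assoc]
  refine HasSum.sum ?_ (HasSum.sum ?_ ?_)
  · refine (hasSum_doubleZetaTerm ha (by omega)).congr_fun fun ⟨l, d⟩ => ?_
    simp only [Function.comp_apply, Equiv.ofBijective_apply, stuffleIndex, doubleZetaTerm]
    push_cast
    ring
  · refine (hasSum_doubleZetaTerm hb (by omega)).congr_fun fun ⟨l, d⟩ => ?_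
    simp only [Function.comp_apply, Equiv.ofBijective_apply, stuffleIndex, doubleZetaTerm]
    push_cast
    ring
  · refine (hasSum_zeta (by omega : 2 ≤ a + b)).congr_fun fun k => ?_
    simp only [Function.comp_apply, Equiv.ofBijective_apply, stuffleIndex]
    rw [pow_add, mul_inv]

lemma sum_range_zeta_mul_zeta (n : ℕ) :
    ∑ i ∈ range n, zeta (i + 2) * zeta (n + 1 - i)
      = 2 * ∑ i ∈ range n, zeta2 (i + 2) (n + 1 - i) + n * zeta (n + 3) := by
  have hstuffle : ∀ i ∈ range n, zeta (i + 2) * zeta (n + 1 - i)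
      = zeta2 (i + 2) (n + 1 - i) + zeta2 (n + 1 - i) (i + 2) + zeta (n + 3) := by
    intro i hi
    have := mem_range.1 hi
    rw [zeta_mul_zeta (by omega) (by omega)]
    congr 2
    omega
  have hreflect : ∑ i ∈ range n, zeta2 (n + 1 - i) (i + 2)
      = ∑ i ∈ range n, zeta2 (i + 2) (n + 1 - i) := by
    rw [← sum_range_reflect]
    refine sum_congr rfl fun i hi => ?_
    have := mem_range.1 hi
    congr 1 <;> omega
  rw [sum_congr rfl hstuffle, sum_add_distrib, sum_add_distrib, hreflect, sum_const, card_range,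
    nsmul_eq_mul]
  ring

/-- Euler's identity: for m ≥ 2,
    2ζ(m,1) = mζ(m+1) − ∑_{j=1}^{m−2} ζ(j+1)ζ(m−j). -/
theorem euler_double_zeta (m : ℕ) (hm : 2 ≤ m) :
    2 * zeta2 m 1 = m * zeta (m + 1) - ∑ j ∈ Finset.Icc 1 (m - 2), zeta (j + 1) * zeta (m - j) := by
  obtain ⟨n, rfl⟩ : ∃ n, m = n + 2 := ⟨m - 2, by omega⟩
  have hIcc : ∑ j ∈ Icc 1 n, zeta (j + 1) * zeta (n + 2 - j)
      = ∑ i ∈ range n, zeta (i + 2) * zeta (n + 1 - i) := by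
    rw [← Ico_add_one_right_eq_Icc, sum_Ico_eq_sum_range, Nat.add_sub_cancel]
    refine sum_congr rfl fun i hi => ?_
    congr 2 <;> omega
  have hsum := sum_range_zeta2_eq_zeta (n := n + 1) (by omega)
  rw [sum_range_succ, Nat.add_sub_cancel_left] at hsum
  rw [Nat.add_sub_cancel, hIcc, sum_range_zeta_mul_zeta]
  push_cast
  linarith
end

section
/- ζ(1̄,1̄) = ζ(2̄) + ζ(1̄,1), i.e., Σ_{k>l≥1} (−1)^{k+l}/(k·l) = Σ_{k≥1} (−1)^k/k² + Σ_{k>l≥1} (−1)^k/(k·l). -/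
/-!
With `e k = (-1)^k / k`, squaring partial sums gives
`2 ζ(1̄,1̄) = (∑ e k)^2 - ∑ 1/k^2 = log² 2 - ζ(2)`.
For `ζ(1̄,1) = ∑ e k H_{k-1}`, the partial fractions `∑_{k+l=n} 1/(kl) = 2 H_{n-1}/n` make
`∑ e k H_{k-1} x^k` half the Cauchy square of `∑ e k x^k = -log(1+x)`, so Abel's limit theorem
gives `ζ(1̄,1) = log² 2 / 2`. Since `ζ(2̄) = -ζ(2)/2 = -π²/12`, both sides equal `log² 2 / 2 - π²/12`.
-/

open Filter Topology Finset Real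

/-- `altInv 0 = 0` since `0⁻¹ = 0`, so sums over `Ico 1 n` may be taken over `range n`. -/
noncomputable def altInv (k : ℕ) : ℝ := (-1) ^ k * (k : ℝ)⁻¹

@[simp] lemma altInv_zero : altInv 0 = 0 := by simp [altInv]

lemma altInv_sq (k : ℕ) : altInv k ^ 2 = ((k : ℝ) ^ 2)⁻¹ := by
  rw [altInv, mul_pow, ← pow_mul, pow_mul', neg_one_sq, one_pow, one_mul, inv_pow]

lemma altInv_mul_altInv (k l : ℕ) : altInv k * altInv l = (-1) ^ (k + l) * ((k : ℝ) * l)⁻¹ := by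
  rw [altInv, altInv, pow_add, mul_inv]
  ring

lemma altInv_mul_inv (k l : ℕ) : altInv k * (l : ℝ)⁻¹ = (-1) ^ k * ((k : ℝ) * l)⁻¹ := by
  rw [altInv, mul_inv, mul_assoc]

lemma sum_Ico_one_eq_sum_range {M : Type*} [AddCommMonoid M] {f : ℕ → M} (hf : f 0 = 0)
    (n : ℕ) : ∑ k ∈ Ico 1 n, f k = ∑ k ∈ range n, f k := by
  rcases n.eq_zero_or_pos with rfl | hn
  · simp
  · rw [sum_range_eq_add_Ico f hn, hf, zero_add]

lemma tendsto_sum_range_of_tendsto_sum_Icc {M : Type*} [AddCommMonoid M] [TopologicalSpace M]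
    {f : ℕ → ℕ → M} (hf : ∀ k, f k 0 = 0) {s : M}
    (h : Tendsto (fun N ↦ ∑ k ∈ Icc 1 N, ∑ l ∈ Ico 1 k, f k l) atTop (𝓝 s)) :
    Tendsto (fun N ↦ ∑ k ∈ range N, ∑ l ∈ range k, f k l) atTop (𝓝 s) := by
  refine (tendsto_add_atTop_iff_nat 1).mp (h.congr fun N ↦ ?_)
  rw [← Ico_add_one_right_eq_Icc, ← sum_Ico_one_eq_sum_range (by simp)]
  exact sum_congr rfl fun k _ ↦ sum_Ico_one_eq_sum_range (hf k) k

lemma two_mul_sum_range_mul_sum_range {R : Type*} [CommRing R] (f : ℕ → R) (N : ℕ) :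
    2 * ∑ k ∈ range N, f k * ∑ l ∈ range k, f l
      = (∑ k ∈ range N, f k) ^ 2 - ∑ k ∈ range N, f k ^ 2 := by
  induction N with
  | zero => simp
  | succ n ih => simp only [sum_range_succ]; linear_combination ih

lemma eq_of_tendsto_sum_range_of_tsum_mul_pow_eq {c : ℕ → ℝ} {s : ℝ} {F : ℝ → ℝ}
    (hc : Tendsto (fun n ↦ ∑ i ∈ range n, c i) atTop (𝓝 s)) (hF : ContinuousAt F 1)
    (hcF : ∀ x ∈ Set.Ioo 0 1, ∑' n, c n * x ^ n = F x) : s = F 1 := by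
  refine tendsto_nhds_unique (Real.tendsto_tsum_powerSeries_nhdsWithin_lt hc)
    ((hF.tendsto.mono_left nhdsWithin_le_nhds).congr' ?_)
  filter_upwards [Ioo_mem_nhdsLT (zero_lt_one' ℝ)] with x hx using (hcF x hx).symm

lemma hasSum_altInv_mul_pow {x : ℝ} (hx : |x| < 1) :
    HasSum (fun n ↦ altInv n * x ^ n) (-log (1 + x)) := by
  have h := hasSum_pow_div_log_of_abs_lt_one (x := -x) (by rwa [abs_neg])
  rw [sub_neg_eq_add] at h
  refine (hasSum_nat_add_iff' 1).mp ?_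
  simp only [range_one, sum_singleton, altInv_zero, zero_mul, sub_zero]
  refine h.congr_fun fun n ↦ ?_
  rw [altInv, neg_pow x, Nat.cast_add_one, div_eq_mul_inv]
  ring

lemma summable_norm_altInv_mul_pow {x : ℝ} (hx : |x| < 1) :
    Summable (fun n ↦ ‖altInv n * x ^ n‖) := by
  refine .of_nonneg_of_le (fun n ↦ norm_nonneg _) (fun n ↦ ?_)
    (summable_geometric_of_lt_one (abs_nonneg x) hx)
  rw [norm_mul, norm_pow, Real.norm_eq_abs]
  refine mul_le_of_le_one_left (by positivity) ?_
  rw [altInv, abs_mul, abs_pow, abs_neg, abs_one, one_pow, one_mul, abs_inv, Nat.abs_cast]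
  exact Nat.cast_inv_le_one n

lemma tendsto_sum_range_altInv :
    Tendsto (fun N ↦ ∑ k ∈ range N, altInv k) atTop (𝓝 (-log 2)) := by
  have hanti : Antitone fun i : ℕ ↦ ((i : ℝ) + 1)⁻¹ := fun m n hmn ↦
    inv_anti₀ (by positivity) (by gcongr)
  obtain ⟨l, hl⟩ := hanti.tendsto_alternating_series_of_tendsto_zero
    (by simpa only [one_div] using tendsto_one_div_add_atTop_nhds_zero_nat (𝕜 := ℝ))
  have hconv : Tendsto (fun N ↦ ∑ k ∈ range N, altInv k) atTop (𝓝 (-l)) := by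
    refine (tendsto_add_atTop_iff_nat 1).mp (hl.neg.congr fun N ↦ ?_)
    rw [sum_range_succ', altInv_zero, add_zero, ← sum_neg_distrib]
    refine sum_congr rfl fun i _ ↦ ?_
    rw [altInv, pow_succ, Nat.cast_add_one]
    ring
  have hlim : -l = -log (1 + 1) :=
    eq_of_tendsto_sum_range_of_tsum_mul_pow_eq hconv (by fun_prop (disch := norm_num))
      fun x hx ↦ (hasSum_altInv_mul_pow (abs_lt.mpr ⟨by linarith [hx.1], hx.2⟩)).tsum_eq
  rwa [hlim, one_add_one_eq_two] at hconv

lemma sum_Ico_inv_mul_inv_sub (n : ℕ) :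
    ∑ k ∈ Ico 1 n, (k : ℝ)⁻¹ * ((n - k : ℕ) : ℝ)⁻¹ = 2 * (n : ℝ)⁻¹ * ∑ k ∈ Ico 1 n, (k : ℝ)⁻¹ := by
  have hsplit : ∀ k ∈ Ico 1 n,
      (k : ℝ)⁻¹ * ((n - k : ℕ) : ℝ)⁻¹ = (n : ℝ)⁻¹ * ((k : ℝ)⁻¹ + ((n - k : ℕ) : ℝ)⁻¹) := by
    intro k hk
    obtain ⟨hk1, hkn⟩ := mem_Ico.mp hk
    rw [Nat.cast_sub hkn.le]
    have : (k : ℝ) ≠ 0 := Nat.cast_ne_zero.mpr (by omega)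
    have : (n : ℝ) - k ≠ 0 := sub_ne_zero.mpr (by exact_mod_cast hkn.ne')
    have : (n : ℝ) ≠ 0 := Nat.cast_ne_zero.mpr (by omega)
    field_simp
    ring
  have hreflect : ∑ k ∈ Ico 1 n, ((n - k : ℕ) : ℝ)⁻¹ = ∑ k ∈ Ico 1 n, (k : ℝ)⁻¹ := by
    simpa using sum_Ico_reflect (fun k ↦ (k : ℝ)⁻¹) 1 (Nat.le_succ n)
  rw [sum_congr rfl hsplit, ← mul_sum, sum_add_distrib, hreflect]
  ring

lemma sum_range_succ_altInv_pow_mul_altInv_pow_sub (x : ℝ) (n : ℕ) :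
    ∑ k ∈ range (n + 1), altInv k * x ^ k * (altInv (n - k) * x ^ (n - k))
      = 2 * (altInv n * (∑ l ∈ range n, (l : ℝ)⁻¹) * x ^ n) := by
  have hterm : ∀ k ∈ Ico 1 n, altInv k * x ^ k * (altInv (n - k) * x ^ (n - k))
      = (-1) ^ n * x ^ n * ((k : ℝ)⁻¹ * ((n - k : ℕ) : ℝ)⁻¹) := by
    intro k hk
    have hkn : k + (n - k) = n := Nat.add_sub_cancel' (mem_Ico.mp hk).2.le
    calc _ = (-1) ^ (k + (n - k)) * x ^ (k + (n - k)) * ((k : ℝ)⁻¹ * ((n - k : ℕ) : ℝ)⁻¹) := by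
          rw [altInv, altInv, pow_add, pow_add]; ring
      _ = _ := by rw [hkn]
  rw [sum_range_succ, Nat.sub_self, altInv_zero, zero_mul, mul_zero, add_zero,
    ← sum_Ico_one_eq_sum_range (by simp), sum_congr rfl hterm, ← mul_sum,
    sum_Ico_inv_mul_inv_sub, sum_Ico_one_eq_sum_range (by simp), altInv]
  ring

lemma hasSum_altInv_mul_harmonic_mul_pow {x : ℝ} (hx : |x| < 1) :
    HasSum (fun n ↦ altInv n * (∑ l ∈ range n, (l : ℝ)⁻¹) * x ^ n) (log (1 + x) ^ 2 / 2) := by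
  have h := hasSum_sum_range_mul_of_summable_norm (summable_norm_altInv_mul_pow hx)
    (summable_norm_altInv_mul_pow hx)
  simp only [sum_range_succ_altInv_pow_mul_altInv_pow_sub, (hasSum_altInv_mul_pow hx).tsum_eq] at h
  rw [show log (1 + x) ^ 2 / 2 = -log (1 + x) * -log (1 + x) / 2 by ring]
  simpa only [mul_div_cancel_left₀ _ (two_ne_zero' ℝ)] using h.div_const 2

lemma eq_of_tendsto_sum_range_sum_range_altInv_mul_inv {b : ℝ}
    (hb : Tendsto (fun N ↦ ∑ k ∈ range N, ∑ l ∈ range k, altInv k * (l : ℝ)⁻¹) atTop (𝓝 b)) :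
    b = log 2 ^ 2 / 2 := by
  simp only [← mul_sum] at hb
  have h := eq_of_tendsto_sum_range_of_tsum_mul_pow_eq hb (by fun_prop (disch := norm_num))
    fun x hx ↦ (hasSum_altInv_mul_harmonic_mul_pow (abs_lt.mpr ⟨by linarith [hx.1], hx.2⟩)).tsum_eq
  rwa [one_add_one_eq_two] at h

lemma tendsto_sum_range_sum_range_altInv_mul_altInv :
    Tendsto (fun N ↦ ∑ k ∈ range N, ∑ l ∈ range k, altInv k * altInv l) atTop
      (𝓝 (log 2 ^ 2 / 2 - π ^ 2 / 12)) := by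
  have hsq : Tendsto (fun N ↦ ∑ k ∈ range N, altInv k ^ 2) atTop (𝓝 (π ^ 2 / 6)) := by
    simpa only [altInv_sq, one_div] using hasSum_zeta_two.tendsto_sum_nat
  convert ((tendsto_sum_range_altInv.pow 2).sub hsq).div_const 2 using 2 with N
  · rw [eq_div_iff two_ne_zero, mul_comm, ← two_mul_sum_range_mul_sum_range]
    simp only [mul_sum]
  · ring

lemma hasSum_neg_one_pow_succ_mul_inv_succ_sq :
    HasSum (fun k : ℕ ↦ (-1) ^ (k + 1) * (((k : ℝ) + 1) ^ 2)⁻¹) (-(π ^ 2 / 12)) := by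
  have hzeta : HasSum (fun n : ℕ ↦ ((n : ℝ) ^ 2)⁻¹) (π ^ 2 / 6) := by
    simpa only [one_div] using hasSum_zeta_two
  -- adding `ζ(2)` cancels the odd terms and doubles the even ones
  have hsum : HasSum (fun n : ℕ ↦ (-1) ^ n * ((n : ℝ) ^ 2)⁻¹ + ((n : ℝ) ^ 2)⁻¹) (π ^ 2 / 12) := by
    rw [show π ^ 2 / 12 = 2⁻¹ * (π ^ 2 / 6) + 0 by ring]
    refine HasSum.even_add_odd ((hzeta.mul_left 2⁻¹).congr_fun fun k ↦ ?_)
      (hasSum_zero.congr_fun fun k ↦ ?_)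
    · push_cast
      rw [pow_mul]
      ring
    · simp [pow_succ, pow_mul]
  have halt := (hsum.sub hzeta).congr_fun fun n ↦ (add_sub_cancel_right _ _).symm
  rw [← hasSum_nat_add_iff' 1] at halt
  rw [show -(π ^ 2 / 12) = π ^ 2 / 12 - π ^ 2 / 6 - ∑ i ∈ range 1, (-1 : ℝ) ^ i * ((i : ℝ) ^ 2)⁻¹ by
    norm_num; ring]
  exact_mod_cast halt

/-- ζ(1̄,1̄) = ζ(2̄) + ζ(1̄,1): the conditionally convergent double Euler sums
are interpreted as limits of partial sums (over the leading index). -/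
theorem zeta_1bar_1bar (a b : ℝ)
    (ha : Tendsto (fun N : ℕ => ∑ k ∈ Finset.Icc 1 N, ∑ l ∈ Finset.Ico 1 k,
        (-1 : ℝ) ^ (k + l) * ((k : ℝ) * (l : ℝ))⁻¹) atTop (𝓝 a))
    (hb : Tendsto (fun N : ℕ => ∑ k ∈ Finset.Icc 1 N, ∑ l ∈ Finset.Ico 1 k,
        (-1 : ℝ) ^ k * ((k : ℝ) * (l : ℝ))⁻¹) atTop (𝓝 b)) :
    a = (∑' k : ℕ, (-1 : ℝ) ^ (k + 1) * (((k : ℝ) + 1) ^ 2)⁻¹) + b := by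
  have ha' : a = log 2 ^ 2 / 2 - π ^ 2 / 12 := by
    refine tendsto_nhds_unique (tendsto_sum_range_of_tendsto_sum_Icc (by simp) ha) ?_
    simpa only [altInv_mul_altInv] using tendsto_sum_range_sum_range_altInv_mul_altInv
  have hb' : b = log 2 ^ 2 / 2 := by
    refine eq_of_tendsto_sum_range_sum_range_altInv_mul_inv ?_
    simpa only [altInv_mul_inv] using tendsto_sum_range_of_tendsto_sum_Icc (by simp) hb
  rw [hasSum_neg_one_pow_succ_mul_inv_succ_sq.tsum_eq, ha', hb']
  ring
end

section
/- 2·ζ(1̄,1) = (ln 2)², i.e., 2·Σ_{k>l≥1} (−1)^k/(k·l) = (ln 2)². -/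
/-!
Squaring `-log (1 - x) = ∑ xⁿ⁺¹ / (n + 1)` as a Cauchy product and splitting
`1 / (a b) = (1 / a + 1 / b) / (a + b)` shows that `∑ₙ (∑_{0<l<n} 1 / (n l)) xⁿ = log (1 - x)² / 2`
for `|x| < 1`. At `-x` this is the generating function of the alternating double series, and
Abel's theorem evaluates the convergent series as its limit `(log 2)² / 2` at `x = 1`.
-/

open Filter Topology Finset

lemma sum_range_inv_mul_inv_sub (n : ℕ) :
    ∑ k ∈ range (n + 1), (((k : ℝ) + 1) * (((n - k : ℕ) : ℝ) + 1))⁻¹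
      = 2 * ∑ l ∈ Ico 1 (n + 2), (((n + 2 : ℕ) : ℝ) * l)⁻¹ := by
  have partial_fractions : ∀ k ∈ range (n + 1), (((k : ℝ) + 1) * (((n - k : ℕ) : ℝ) + 1))⁻¹
      = ((n : ℝ) + 2)⁻¹ * (((k : ℝ) + 1)⁻¹ + (((n - k : ℕ) : ℝ) + 1)⁻¹) := by
    intro k hk
    have hsum : ((k : ℝ) + 1) + (((n - k : ℕ) : ℝ) + 1) = n + 2 := by
      rw [Nat.cast_sub (Nat.le_of_lt_succ (mem_range.mp hk))]; ring
    field_simp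
    linarith
  have reflect : ∑ k ∈ range (n + 1), (((n - k : ℕ) : ℝ) + 1)⁻¹
      = ∑ k ∈ range (n + 1), ((k : ℝ) + 1)⁻¹ :=
    sum_range_reflect (fun k => ((k : ℝ) + 1)⁻¹) (n + 1)
  rw [sum_congr rfl partial_fractions, ← mul_sum, sum_add_distrib, reflect, ← two_mul,
    mul_left_comm, sum_Ico_eq_sum_range, show n + 2 - 1 = n + 1 from rfl, mul_sum]
  congr 1
  refine sum_congr rfl fun k _ => ?_
  push_cast
  rw [mul_inv]
  ring

lemma hasSum_log_one_sub_sq_div_two {x : ℝ} (hx : |x| < 1) :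
    HasSum (fun n : ℕ => (∑ l ∈ Ico 1 n, ((n : ℝ) * l)⁻¹) * x ^ n) (Real.log (1 - x) ^ 2 / 2) := by
  set f : ℕ → ℝ := fun n => x ^ (n + 1) / (n + 1)
  have hf : HasSum f (-Real.log (1 - x)) := Real.hasSum_pow_div_log_of_abs_lt_one hx
  have hf_norm : Summable fun n => ‖f n‖ := by
    refine (Real.hasSum_pow_div_log_of_abs_lt_one (x := |x|) (by rwa [abs_abs])).summable.congr
      fun n => ?_
    simp [f, abs_of_pos (n.cast_add_one_pos : (0 : ℝ) < n + 1)]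
  have hprod := hasSum_sum_range_mul_of_summable_norm hf_norm hf_norm
  rw [hf.tsum_eq, neg_mul_neg, ← sq] at hprod
  have shifted : HasSum (fun n : ℕ => (∑ l ∈ Ico 1 (n + 2), (((n + 2 : ℕ) : ℝ) * l)⁻¹) * x ^ (n + 2))
      (Real.log (1 - x) ^ 2 / 2) := by
    refine (hprod.div_const 2).congr_fun fun n => ?_
    have hterm : ∀ k ∈ range (n + 1),
        f k * f (n - k) = x ^ (n + 2) * (((k : ℝ) + 1) * (((n - k : ℕ) : ℝ) + 1))⁻¹ := by
      intro k hk
      have hexp : k + 1 + (n - k + 1) = n + 2 := by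
        have := mem_range.mp hk; omega
      rw [div_mul_div_comm, ← pow_add, hexp, div_eq_mul_inv]
    rw [sum_congr rfl hterm, ← mul_sum, sum_range_inv_mul_inv_sub]
    ring
  simpa [sum_range_succ] using
    (hasSum_nat_add_iff (f := fun n : ℕ => (∑ l ∈ Ico 1 n, ((n : ℝ) * l)⁻¹) * x ^ n) 2).mp shifted

lemma eq_of_tendsto_sum_range_of_hasSum_powerSeries {t : ℕ → ℝ} {a : ℝ} {f : ℝ → ℝ}
    (ht : Tendsto (fun n => ∑ i ∈ range n, t i) atTop (𝓝 a))
    (hf : ∀ x ∈ Set.Ioo 0 1, HasSum (fun n => t n * x ^ n) (f x))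
    (hf_one : ContinuousWithinAt f (Set.Iio 1) 1) : a = f 1 := by
  refine tendsto_nhds_unique ((Real.tendsto_tsum_powerSeries_nhdsWithin_lt ht).congr' ?_) hf_one
  filter_upwards [Ioo_mem_nhdsLT zero_lt_one] with x hx using (hf x hx).tsum_eq

/-- 2·ζ(1̄,1) = (ln 2)², where ζ(1̄,1) = ∑_{k>l≥1} (−1)^k/(k·l) is interpreted as
the limit of partial sums (over the leading index). -/
theorem two_zeta_1bar_1 (a : ℝ)
    (ha : Tendsto (fun N : ℕ => ∑ k ∈ Finset.Icc 1 N, ∑ l ∈ Finset.Ico 1 k,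
        (-1 : ℝ) ^ k * ((k : ℝ) * (l : ℝ))⁻¹) atTop (𝓝 a)) :
    2 * a = Real.log 2 ^ 2 := by
  set t : ℕ → ℝ := fun k => ∑ l ∈ Ico 1 k, (-1 : ℝ) ^ k * ((k : ℝ) * (l : ℝ))⁻¹
  have partial_sums : Tendsto (fun n => ∑ i ∈ range n, t i) atTop (𝓝 a) := by
    rw [← tendsto_add_atTop_iff_nat 1]
    refine ha.congr fun N => ?_
    rw [range_eq_Ico, sum_eq_sum_Ico_succ_bot N.succ_pos, show t 0 = 0 by simp [t], zero_add]
    rfl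
  have generating_function : ∀ x ∈ Set.Ioo (0 : ℝ) 1,
      HasSum (fun n => t n * x ^ n) (Real.log (1 + x) ^ 2 / 2) := by
    intro x hx
    have hx' : |-x| < 1 := by rw [abs_neg, abs_of_pos hx.1]; exact hx.2
    convert hasSum_log_one_sub_sq_div_two hx' using 1
    · funext n
      simp only [t, sum_mul, neg_pow x]
      refine sum_congr rfl fun l _ => ?_
      ring
    · rw [sub_neg_eq_add]
  have hcont : ContinuousWithinAt (fun x : ℝ => Real.log (1 + x) ^ 2 / 2) (Set.Iio 1) 1 :=
    (((continuousAt_const.add continuousAt_id).log (by norm_num)).pow 2).div_const 2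
      |>.continuousWithinAt
  rw [eq_of_tendsto_sum_range_of_hasSum_powerSeries partial_sums generating_function hcont,
    one_add_one_eq_two]
  ring
end

section
/- ζ(3) = 8·ζ(2̄,1), i.e., Σ_{k≥1} 1/k³ = 8·Σ_{k>l≥1} (−1)^k/(k²·l). -/
/-!
Put `W(s, t) = ∑_{a,b ≥ 1} s^a t^b / (a b (a + b))`, an alternating Mordell–Tornheim sum.
Summing by rows, `∑_b 1 / (b (a + b)) = H_a / a` telescopes, so `W(s, 1) = ∑_a s^a H_a / a²`.
Summing along the diagonals `a + b = k`, where `1 / (a b) = (1 / a + 1 / b) / k`, gives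
`W(s, s) = 2 ∑_k s^k H_{k-1} / k² = 2 (W(s, 1) - ∑_k s^k / k³)`; for `s = -1` the middle sum is
`2 ζ(2̄,1)`, and for `s = 1` the identity yields `W(1, 1) = 2 ζ(3)`. Keeping only even `a, b`,
where the summand scales by `1/8`, gives `∑_{s,t = ±1} W(s, t) = W(1, 1) / 2`. With
`W(1, -1) = W(-1, 1)` and `∑_k (-1)^k / k³ = -3/4 ζ(3)` (the same even-index trick), these linear
relations force `ζ(2̄,1) = ζ(3) / 8`.
-/

open Finset Filter Topology

lemma Summable.mul_left_of_norm_le_one {ι : Type*} {f c : ι → ℝ} (hf : Summable f)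
    (hc : ∀ i, ‖c i‖ ≤ 1) : Summable fun i => c i * f i :=
  hf.norm.of_norm_bounded fun i =>
    (norm_mul_le _ _).trans (mul_le_of_le_one_left (norm_nonneg _) (hc i))

lemma HasSum.sum_antidiagonal {α : Type*} [AddCommMonoid α] [TopologicalSpace α] [ContinuousAdd α]
    [RegularSpace α] {f : ℕ × ℕ → α} {a : α} (h : HasSum f a) :
    HasSum (fun n => ∑ p ∈ antidiagonal n, f p) a :=
  (HasAntidiagonal.sigmaAntidiagonalEquivProd.hasSum_iff.2 h).sigma fun n =>
    sum_coe_sort (antidiagonal n) f ▸ hasSum_fintype fun p : antidiagonal n => f p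

lemma tsum_one_add_neg_one_pow_mul (φ : ℕ → ℝ) :
    ∑' n, (1 + (-1) ^ n) * φ n = 2 * ∑' n, φ (2 * n) := by
  have hsupp : (Function.support fun n => (1 + (-1 : ℝ) ^ n) * φ n) ⊆ Set.range (2 * ·) := by
    intro n hn
    obtain ⟨m, rfl⟩ := (Nat.even_or_odd n).resolve_right fun h => hn (by simp [h.neg_one_pow])
    exact ⟨m, two_mul m⟩
  rw [← (mul_right_injective₀ two_ne_zero).tsum_eq hsupp, ← tsum_mul_left]
  simp [pow_mul, one_add_one_eq_two]

lemma tsum_one_add_neg_one_pow_mul_prod (φ : ℕ × ℕ → ℝ) :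
    ∑' p : ℕ × ℕ, (1 + (-1) ^ p.1) * (1 + (-1) ^ p.2) * φ p
      = 4 * ∑' p : ℕ × ℕ, φ (2 * p.1, 2 * p.2) := by
  have hinj : Function.Injective (Prod.map (2 * ·) (2 * ·) : ℕ × ℕ → ℕ × ℕ) :=
    (mul_right_injective₀ two_ne_zero).prodMap (mul_right_injective₀ two_ne_zero)
  have hsupp : (Function.support fun p : ℕ × ℕ => (1 + (-1 : ℝ) ^ p.1) * (1 + (-1) ^ p.2) * φ p)
      ⊆ Set.range (Prod.map (2 * ·) (2 * ·)) := by
    rintro ⟨a, b⟩ hp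
    obtain ⟨c, rfl⟩ := (Nat.even_or_odd a).resolve_right fun h => hp (by simp [h.neg_one_pow])
    obtain ⟨d, rfl⟩ := (Nat.even_or_odd b).resolve_right fun h => hp (by simp [h.neg_one_pow])
    exact ⟨(c, d), by simp [two_mul]⟩
  rw [← hinj.tsum_eq hsupp, ← tsum_mul_left]
  norm_num [pow_mul, Prod.map]

lemma tsum_neg_one_pow_mul_inv_pow {p : ℕ} (hp : 1 < p) :
    ∑' k : ℕ, (-1) ^ k * ((k : ℝ) ^ p)⁻¹ = (2 / 2 ^ p - 1) * ∑' k : ℕ, ((k : ℝ) ^ p)⁻¹ := by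
  have hζ := Real.summable_nat_pow_inv.2 hp
  have hη : Summable fun k : ℕ => (-1) ^ k * ((k : ℝ) ^ p)⁻¹ :=
    hζ.mul_left_of_norm_le_one fun k => by simp
  have h := tsum_one_add_neg_one_pow_mul fun k => ((k : ℝ) ^ p)⁻¹
  simp only [add_mul, one_mul, hζ.tsum_add hη, Nat.cast_mul, mul_pow, mul_inv, tsum_mul_left] at h
  push_cast at h
  linear_combination h

lemma cast_harmonic_eq_sum_range (n : ℕ) : (harmonic n : ℝ) = ∑ i ∈ range n, ((i : ℝ) + 1)⁻¹ := by
  simp [harmonic]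

-- Truncated subtraction and `0⁻¹ = 0` make this hold at `k = 0` as well.
lemma cast_harmonic_sub_one (k : ℕ) : (harmonic (k - 1) : ℝ) = harmonic k - (k : ℝ)⁻¹ := by
  cases k <;> simp

lemma hasSum_inv_sub_inv_add (a : ℕ) :
    HasSum (fun n : ℕ => ((n : ℝ) + 1)⁻¹ - ((n : ℝ) + 1 + a)⁻¹) (harmonic a) := by
  have partial_sum (N : ℕ) : ∑ n ∈ range N, (((n : ℝ) + 1)⁻¹ - ((n : ℝ) + 1 + a)⁻¹)
      = harmonic a - ∑ i ∈ range a, ((N : ℝ) + i + 1)⁻¹ := by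
    have split_at_N := sum_range_add (fun i : ℕ => ((i : ℝ) + 1)⁻¹) N a
    have split_at_a := sum_range_add (fun i : ℕ => ((i : ℝ) + 1)⁻¹) a N
    rw [add_comm a N] at split_at_a
    simp only [cast_harmonic_eq_sum_range, sum_sub_distrib, Nat.cast_add] at split_at_N split_at_a ⊢
    have reorder : ∑ n ∈ range N, ((n : ℝ) + 1 + a)⁻¹ = ∑ n ∈ range N, ((a : ℝ) + n + 1)⁻¹ :=
      sum_congr rfl fun n _ => by ring_nf
    linarith
  have tail_tendsto : Tendsto (fun N : ℕ => ∑ i ∈ range a, ((N : ℝ) + i + 1)⁻¹) atTop (𝓝 0) := by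
    rw [← sum_const_zero (s := range a)]
    refine tendsto_finsetSum _ fun i _ => ?_
    exact tendsto_inv_atTop_zero.comp
      (tendsto_atTop_add_const_right _ _ (tendsto_atTop_add_const_right _ _ tendsto_natCast_atTop_atTop))
  rw [hasSum_iff_tendsto_nat_of_nonneg]
  · simpa [partial_sum] using tail_tendsto.const_sub (harmonic a : ℝ)
  · intro n
    rw [sub_nonneg]
    exact inv_anti₀ (by positivity) (by simp)

lemma tsum_ite_mul_inv_eq_harmonic (c : ℝ) (k : ℕ) :
    ∑' l : ℕ, (if 1 ≤ l ∧ l < k then c * ((k : ℝ) ^ 2 * l)⁻¹ else 0)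
      = c * harmonic (k - 1) / (k : ℝ) ^ 2 := by
  rw [tsum_eq_sum (s := Ico 1 k) fun l hl => if_neg (mt mem_Ico.2 hl),
    sum_congr rfl fun l hl => if_pos (mem_Ico.1 hl), cast_harmonic_eq_sum_range, sum_Ico_eq_sum_range]
  simp only [mul_inv, ← mul_sum, Nat.cast_add, Nat.cast_one, add_comm (1 : ℝ)]
  ring

-- `0⁻¹ = 0` makes the term vanish when `a = 0` or `b = 0`, so sums over `ℕ` run over `a, b ≥ 1`.
noncomputable def tornheimTerm (a b : ℕ) : ℝ := ((a : ℝ) * b * (a + b))⁻¹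

lemma tornheimTerm_nonneg (a b : ℕ) : 0 ≤ tornheimTerm a b := by
  unfold tornheimTerm; positivity

lemma tornheimTerm_comm (a b : ℕ) : tornheimTerm a b = tornheimTerm b a := by
  unfold tornheimTerm; ring_nf

lemma tornheimTerm_two_mul (a b : ℕ) : tornheimTerm (2 * a) (2 * b) = tornheimTerm a b / 8 := by
  unfold tornheimTerm; push_cast; rw [div_eq_mul_inv, ← mul_inv]; ring_nf

lemma tornheimTerm_le_rpow_three_halves (a b : ℕ) :
    tornheimTerm a b ≤ ((a : ℝ) ^ (3 / 2 : ℝ))⁻¹ * ((b : ℝ) ^ (3 / 2 : ℝ))⁻¹ := by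
  rcases (a * b).eq_zero_or_pos with hab | hab
  · rcases Nat.mul_eq_zero.1 hab with rfl | rfl <;> simp [tornheimTerm]
  have hab' : (0 : ℝ) < a * b := by exact_mod_cast hab
  have h32 : ((a : ℝ) * b) ^ (3 / 2 : ℝ) = a * b * √(a * b) := by
    rw [Real.sqrt_eq_rpow, ← Real.rpow_one_add' hab'.le (by norm_num)]; norm_num
  have hsqrt : √((a : ℝ) * b) ≤ a + b := by
    refine Real.sqrt_le_iff.2 ⟨by positivity, ?_⟩
    nlinarith [sq_nonneg ((a : ℝ) - b)]
  rw [← mul_inv, ← Real.mul_rpow (by positivity) (by positivity), h32, tornheimTerm]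
  exact inv_anti₀ (by positivity) (mul_le_mul_of_nonneg_left hsqrt hab'.le)

lemma summable_tornheimTerm : Summable fun p : ℕ × ℕ => tornheimTerm p.1 p.2 := by
  have h := Real.summable_nat_rpow_inv.2 (by norm_num : (1 : ℝ) < 3 / 2)
  exact (h.mul_of_nonneg h (fun _ => by positivity) fun _ => by positivity).of_nonneg_of_le
    (fun p => tornheimTerm_nonneg p.1 p.2) fun p => tornheimTerm_le_rpow_three_halves p.1 p.2

lemma hasSum_tornheimTerm_right (a : ℕ) :
    HasSum (fun b => tornheimTerm a b) (harmonic a / (a : ℝ) ^ 2) := by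
  have shift (n : ℕ) : tornheimTerm a (n + 1)
      = ((a : ℝ) ^ 2)⁻¹ * (((n : ℝ) + 1)⁻¹ - ((n : ℝ) + 1 + a)⁻¹) := by
    rcases a.eq_zero_or_pos with rfl | ha
    · simp [tornheimTerm]
    have : (0 : ℝ) < a := by exact_mod_cast ha
    unfold tornheimTerm; push_cast; field_simp; ring
  rw [← hasSum_nat_add_iff' 1, sum_range_one, show tornheimTerm a 0 = 0 by simp [tornheimTerm],
    sub_zero, funext shift, div_eq_inv_mul]
  exact (hasSum_inv_sub_inv_add a).mul_left _

lemma sum_antidiagonal_tornheimTerm (k : ℕ) :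
    ∑ p ∈ antidiagonal k, tornheimTerm p.1 p.2 = 2 * harmonic (k - 1) / (k : ℝ) ^ 2 := by
  match k with
  | 0 => simp [tornheimTerm]
  | 1 => simp [Nat.sum_antidiagonal_succ, tornheimTerm]
  | n + 2 =>
    have split (p : ℕ × ℕ) (hp : p ∈ antidiagonal n) : tornheimTerm (p.1 + 1) (p.2 + 1)
        = (((n : ℝ) + 2) ^ 2)⁻¹ * (((p.1 : ℝ) + 1)⁻¹ + ((p.2 : ℝ) + 1)⁻¹) := by
      have hn : (p.1 : ℝ) + p.2 = n := by exact_mod_cast mem_antidiagonal.1 hp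
      unfold tornheimTerm; push_cast; field_simp; rw [← hn]; ring
    have swap : ∑ p ∈ antidiagonal n, ((p.2 : ℝ) + 1)⁻¹ = ∑ p ∈ antidiagonal n, ((p.1 : ℝ) + 1)⁻¹ :=
      Nat.sum_antidiagonal_swap (f := fun p => ((p.1 : ℝ) + 1)⁻¹)
    rw [Nat.sum_antidiagonal_succ, Nat.sum_antidiagonal_succ', sum_congr rfl split, ← mul_sum,
      sum_add_distrib, swap, Nat.sum_antidiagonal_eq_sum_range_succ_mk, cast_harmonic_eq_sum_range]
    simp [tornheimTerm]
    ring

noncomputable def tornheimSum (s t : ℝ) : ℝ :=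
  ∑' p : ℕ × ℕ, s ^ p.1 * t ^ p.2 * tornheimTerm p.1 p.2

section TornheimSum

variable {s t : ℝ}

lemma summable_tornheimSum (hs : |s| ≤ 1) (ht : |t| ≤ 1) :
    Summable fun p : ℕ × ℕ => s ^ p.1 * t ^ p.2 * tornheimTerm p.1 p.2 := by
  refine summable_tornheimTerm.mul_left_of_norm_le_one fun p => ?_
  rw [norm_mul, norm_pow, norm_pow]
  exact mul_le_one₀ (pow_le_one₀ (norm_nonneg s) hs) (by positivity) (pow_le_one₀ (norm_nonneg t) ht)

lemma tornheimSum_comm (s t : ℝ) : tornheimSum s t = tornheimSum t s := by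
  rw [tornheimSum, ← (Equiv.prodComm ℕ ℕ).tsum_eq]
  simp only [Equiv.prodComm_apply, Prod.fst_swap, Prod.snd_swap, tornheimTerm_comm, tornheimSum]
  ring_nf

lemma hasSum_tornheimSum_right_one (hs : |s| ≤ 1) :
    HasSum (fun a : ℕ => s ^ a * harmonic a / (a : ℝ) ^ 2) (tornheimSum s 1) := by
  refine (summable_tornheimSum hs (by simp)).hasSum.prod_fiberwise fun a => ?_
  simpa [mul_div_assoc] using (hasSum_tornheimTerm_right a).mul_left (s ^ a)

lemma hasSum_tornheimSum_self (hs : |s| ≤ 1) :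
    HasSum (fun k : ℕ => 2 * (s ^ k * harmonic (k - 1) / (k : ℝ) ^ 2)) (tornheimSum s s) := by
  refine (summable_tornheimSum hs hs).hasSum.sum_antidiagonal.congr_fun fun k => ?_
  rw [sum_congr rfl fun p hp => by rw [← pow_add, mem_antidiagonal.1 hp], ← mul_sum,
    sum_antidiagonal_tornheimTerm]
  ring

lemma tornheimSum_self (hs : |s| ≤ 1) :
    tornheimSum s s = 2 * (tornheimSum s 1 - ∑' k : ℕ, s ^ k * ((k : ℝ) ^ 3)⁻¹) := by
  have hcube : Summable fun k : ℕ => s ^ k * ((k : ℝ) ^ 3)⁻¹ :=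
    (Real.summable_nat_pow_inv.2 (by norm_num)).mul_left_of_norm_le_one fun k => by
      rw [norm_pow]
      exact pow_le_one₀ (norm_nonneg s) hs
  refine (hasSum_tornheimSum_self hs).unique
    ((((hasSum_tornheimSum_right_one hs).sub hcube.hasSum).mul_left 2).congr_fun fun k => ?_)
  rw [cast_harmonic_sub_one]
  ring

lemma tornheimSum_sign_sum_eq_half :
    tornheimSum 1 1 + tornheimSum (-1) 1 + tornheimSum 1 (-1) + tornheimSum (-1) (-1)
      = tornheimSum 1 1 / 2 := by
  have one : |(1 : ℝ)| ≤ 1 := by simp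
  have neg_one : |(-1 : ℝ)| ≤ 1 := by simp
  have hsum := (((summable_tornheimSum one one).hasSum.add
    (summable_tornheimSum neg_one one).hasSum).add (summable_tornheimSum one neg_one).hasSum).add
    (summable_tornheimSum neg_one neg_one).hasSum
  calc _ = ∑' p : ℕ × ℕ, (1 + (-1) ^ p.1) * (1 + (-1) ^ p.2) * tornheimTerm p.1 p.2 :=
        hsum.tsum_eq.symm.trans (tsum_congr fun p => by ring)
    _ = 4 * ∑' p : ℕ × ℕ, tornheimTerm p.1 p.2 / 8 := by
        simp only [tsum_one_add_neg_one_pow_mul_prod, tornheimTerm_two_mul]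
    _ = tornheimSum 1 1 / 2 := by
        simp only [tornheimSum, one_pow, one_mul, tsum_div_const]; ring

end TornheimSum

/-- ζ(3) = 8·ζ(2̄,1): ∑_{k≥1} 1/k³ = 8 ∑_{k>l≥1} (−1)^k/(k²·l). -/
theorem zeta_three_eq :
    (∑' k : ℕ, (((k : ℝ) + 1) ^ 3)⁻¹)
      = 8 * ∑' k : ℕ, ∑' l : ℕ, if 1 ≤ l ∧ l < k then
          (-1 : ℝ) ^ k * ((k : ℝ) ^ 2 * (l : ℝ))⁻¹ else 0 := by
  have lhs : ∑' k : ℕ, (((k : ℝ) + 1) ^ 3)⁻¹ = ∑' k : ℕ, ((k : ℝ) ^ 3)⁻¹ := by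
    rw [(Real.summable_nat_pow_inv.2 (by norm_num)).tsum_eq_zero_add]
    simp
  have rhs : (∑' k : ℕ, ∑' l : ℕ, if 1 ≤ l ∧ l < k then
      (-1 : ℝ) ^ k * ((k : ℝ) ^ 2 * (l : ℝ))⁻¹ else 0) = tornheimSum (-1) (-1) / 2 := by
    simp_rw [tsum_ite_mul_inv_eq_harmonic]
    rw [← (hasSum_tornheimSum_self (by simp)).tsum_eq, tsum_mul_left]
    ring
  have eta := tsum_neg_one_pow_mul_inv_pow (p := 3) (by norm_num)
  have diag_one := tornheimSum_self (s := 1) (by simp)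
  have diag_neg_one := tornheimSum_self (s := -1) (by simp)
  simp only [one_pow, one_mul] at diag_one
  rw [lhs, rhs]
  linarith [tornheimSum_sign_sum_eq_half, tornheimSum_comm 1 (-1)]
end

section
/- ζ(2,1) = ζ(3), i.e., Σ_{k>l≥1} 1/(k²·l) = Σ_{k≥1} 1/k³. -/
/-!
Euler's argument. Let `S = ∑_{a,b ≥ 1} 1/(ab(a+b))`. The partial fractions
`1/(ab(a+b)) = 1/((a+b)²b) + 1/((a+b)²a)` and the substitution `k = a + b`, `l = b` give
`S = 2 ζ(2,1)`. Summing over `a` first instead, `1/(a(a+b)) = (1/a - 1/(a+b))/b` telescopes to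
`H_b/b`, so `S = ∑_b H_b/b² = ζ(2,1) + ζ(3)`. As `k²l ≥ (kl)^{3/2}` for `l < k`, `ζ(2,1)` is at most
`ζ(3/2)²`, hence finite, and cancels.

The sums are taken in `ℝ≥0∞`, where all rearrangements are unconditional.
-/

open Filter Finset Topology
open scoped NNReal ENNReal

theorem Antitone.hasSum_sub_add {g : ℕ → ℝ} (hg : Antitone g) (hlim : Tendsto g atTop (𝓝 0))
    (n : ℕ) : HasSum (fun m => g m - g (m + n)) (∑ i ∈ range n, g i) := by
  have partial_sum (M : ℕ) : ∑ m ∈ range M, (g m - g (m + n))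
      = ∑ i ∈ range n, g i - ∑ i ∈ range n, g (M + i) := by
    induction M with
    | zero => simp
    | succ M ih =>
      have shift := sum_range_sub' (fun i => g (M + i)) n
      simp only [sum_sub_distrib, add_zero, ← add_assoc, add_right_comm M _ 1] at shift
      rw [sum_range_succ, ih]
      linarith
  rw [hasSum_iff_tendsto_nat_of_nonneg (fun m => sub_nonneg.2 (hg (Nat.le_add_right m n)))]
  simp_rw [partial_sum]
  have tail : Tendsto (fun M => ∑ i ∈ range n, g (M + i)) atTop (𝓝 0) := by
    simpa using tendsto_finsetSum (range n) fun i _ => hlim.comp (tendsto_add_atTop_nat i)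
  simpa using tendsto_const_nhds.sub tail

theorem NNReal.hasSum_inv_mul_add {n : ℕ} (hn : n ≠ 0) :
    HasSum (fun m : ℕ => (((m : ℝ≥0) + 1) * (m + 1 + n))⁻¹)
      ((n : ℝ≥0)⁻¹ * ∑ i ∈ range n, ((i : ℝ≥0) + 1)⁻¹) := by
  have hg : Antitone fun m : ℕ => ((m : ℝ) + 1)⁻¹ := fun a b hab => by
    dsimp only
    gcongr
  have hlim : Tendsto (fun m : ℕ => ((m : ℝ) + 1)⁻¹) atTop (𝓝 0) := by
    simpa only [one_div] using tendsto_one_div_add_atTop_nhds_zero_nat (𝕜 := ℝ)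
  rw [← NNReal.hasSum_coe]
  push_cast
  have hn' : (n : ℝ) ≠ 0 := by exact_mod_cast hn
  have term (m : ℕ) : (((m : ℝ) + 1) * (m + 1 + n))⁻¹
      = (n : ℝ)⁻¹ * (((m : ℝ) + 1)⁻¹ - (((m + n : ℕ) : ℝ) + 1)⁻¹) := by
    push_cast
    field_simp
    ring
  simp_rw [term]
  exact (hg.hasSum_sub_add hlim n).mul_left _

theorem inv_mul_mul_add {K : Type*} [Semifield K] {a b : K} (ha : a ≠ 0) (hb : b ≠ 0)
    (hab : a + b ≠ 0) : (a * b * (a + b))⁻¹ = ((a + b) ^ 2 * b)⁻¹ + ((a + b) ^ 2 * a)⁻¹ := by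
  field_simp

theorem NNReal.hasSum_inv_mul_mul_add (n : ℕ) :
    HasSum (fun m : ℕ => (((m : ℝ≥0) + 1) * (n + 1) * (m + n + 2))⁻¹)
      (∑ i ∈ range (n + 1), (((n : ℝ≥0) + 1) ^ 2 * (i + 1))⁻¹) := by
  have h := (hasSum_inv_mul_add n.succ_ne_zero).mul_left ((n : ℝ≥0) + 1)⁻¹
  have term (m : ℕ) : (((m : ℝ≥0) + 1) * (n + 1) * (m + n + 2))⁻¹
      = ((n : ℝ≥0) + 1)⁻¹ * (((m : ℝ≥0) + 1) * (m + 1 + (n + 1 : ℕ)))⁻¹ := by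
    push_cast
    rw [← mul_inv]
    ring_nf
  have value : ∑ i ∈ range (n + 1), (((n : ℝ≥0) + 1) ^ 2 * (i + 1))⁻¹
      = ((n : ℝ≥0) + 1)⁻¹ * (((n + 1 : ℕ) : ℝ≥0)⁻¹ * ∑ i ∈ range (n + 1), ((i : ℝ≥0) + 1)⁻¹) := by
    push_cast
    rw [← mul_assoc, mul_sum, ← mul_inv, ← pow_two]
    simp only [mul_inv]
  simp_rw [term, value]
  exact h

theorem NNReal.rpow_three_halves_mul_le {x y : ℝ≥0} (hxy : x ≤ y) :
    y ^ (3 / 2 : ℝ) * x ^ (3 / 2 : ℝ) ≤ y ^ 2 * x := by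
  have split (z : ℝ≥0) : z ^ (3 / 2 : ℝ) = z * z ^ (1 / 2 : ℝ) := by
    rw [← NNReal.rpow_one_add' (by norm_num)]
    norm_num
  calc y ^ (3 / 2 : ℝ) * x ^ (3 / 2 : ℝ) = y * x * (y ^ (1 / 2 : ℝ) * x ^ (1 / 2 : ℝ)) := by
        rw [split, split]
        ring
    _ ≤ y * x * (y ^ (1 / 2 : ℝ) * y ^ (1 / 2 : ℝ)) := by gcongr
    _ = y ^ 2 * x := by
        rw [← NNReal.rpow_add' (by norm_num)]
        norm_num
        ring

theorem tsum_ite_lt_eq_sum_range {M : Type*} [AddCommMonoid M] [TopologicalSpace M]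
    (f : ℕ → M) (n : ℕ) : ∑' i, (if i < n then f i else 0) = ∑ i ∈ range n, f i :=
  (tsum_eq_sum fun _ hi => if_neg (by simpa using hi)).trans
    (sum_congr rfl fun _ hi => if_pos (mem_range.1 hi))

theorem ENNReal.tsum_sum_range_eq_tsum_tsum (f : ℕ → ℕ → ℝ≥0∞) :
    ∑' n, ∑ i ∈ range n, f n i = ∑' m, ∑' i, f (m + i + 1) i := by
  calc ∑' n, ∑ i ∈ range n, f n i = ∑' n, ∑' i, if i < n then f n i else 0 := by
        simp only [tsum_ite_lt_eq_sum_range]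
    _ = ∑' i, ∑' n, if i < n then f n i else 0 := ENNReal.tsum_comm
    _ = ∑' i, ∑' m, f (m + i + 1) i := by
        refine tsum_congr fun i => ?_
        rw [← ENNReal.summable.sum_add_tsum_nat_add' (k := i + 1), sum_eq_zero, zero_add]
        · exact tsum_congr fun m => by rw [if_pos (by omega), add_assoc]
        · intro n hn
          rw [if_neg (by simpa using hn)]
    _ = ∑' m, ∑' i, f (m + i + 1) i := ENNReal.tsum_comm

theorem ENNReal.toReal_tsum_tsum_coe {α β : Type*} {f : α → β → ℝ≥0}
    (h : ∑' a, ∑' b, (f a b : ℝ≥0∞) ≠ ∞) :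
    (∑' a, ∑' b, (f a b : ℝ≥0∞)).toReal = ∑' a, ∑' b, (f a b : ℝ) := by
  rw [ENNReal.tsum_toReal_eq (ENNReal.ne_top_of_tsum_ne_top h)]
  exact tsum_congr fun a => ENNReal.tsum_toReal_eq fun b => ENNReal.coe_ne_top

noncomputable def zetaTwoOne : ℝ≥0∞ :=
  ∑' n : ℕ, ∑ i ∈ range n, (((((n : ℝ≥0) + 1) ^ 2 * (i + 1))⁻¹ : ℝ≥0) : ℝ≥0∞)

noncomputable def zetaThree : ℝ≥0∞ :=
  ∑' n : ℕ, (((((n : ℝ≥0) + 1) ^ 3)⁻¹ : ℝ≥0) : ℝ≥0∞)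

noncomputable def eulerSum : ℝ≥0∞ :=
  ∑' m : ℕ, ∑' n : ℕ, (((((m : ℝ≥0) + 1) * (n + 1) * (m + n + 2))⁻¹ : ℝ≥0) : ℝ≥0∞)

theorem zetaTwoOne_eq_tsum_tsum : zetaTwoOne
    = ∑' m : ℕ, ∑' n : ℕ, (((((m : ℝ≥0) + n + 2) ^ 2 * (n + 1))⁻¹ : ℝ≥0) : ℝ≥0∞) := by
  rw [zetaTwoOne, ENNReal.tsum_sum_range_eq_tsum_tsum]
  congr! 5 with m n
  push_cast
  ring

theorem eulerSum_eq_zetaTwoOne_add_zetaTwoOne : eulerSum = zetaTwoOne + zetaTwoOne := by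
  have partial_fractions (m n : ℕ) : (((m : ℝ≥0) + 1) * (n + 1) * (m + n + 2))⁻¹
      = (((m : ℝ≥0) + n + 2) ^ 2 * (n + 1))⁻¹ + (((n : ℝ≥0) + m + 2) ^ 2 * (m + 1))⁻¹ := by
    have h := inv_mul_mul_add (a := (m : ℝ≥0) + 1) (b := (n : ℝ≥0) + 1) (by positivity)
      (by positivity) (by positivity)
    rw [show (m : ℝ≥0) + 1 + (n + 1) = m + n + 2 by ring] at h
    rw [add_comm (n : ℝ≥0) m]
    exact h
  simp only [eulerSum, partial_fractions, ENNReal.coe_add, ENNReal.tsum_add]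
  rw [← zetaTwoOne_eq_tsum_tsum, ENNReal.tsum_comm, ← zetaTwoOne_eq_tsum_tsum]

theorem eulerSum_eq_zetaTwoOne_add_zetaThree : eulerSum = zetaTwoOne + zetaThree := by
  have inner (n : ℕ) : ∑' m : ℕ, (((((m : ℝ≥0) + 1) * (n + 1) * (m + n + 2))⁻¹ : ℝ≥0) : ℝ≥0∞)
      = ∑ i ∈ range n, (((((n : ℝ≥0) + 1) ^ 2 * (i + 1))⁻¹ : ℝ≥0) : ℝ≥0∞)
        + (((((n : ℝ≥0) + 1) ^ 3)⁻¹ : ℝ≥0) : ℝ≥0∞) := by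
    have h := NNReal.hasSum_inv_mul_mul_add n
    rw [← ENNReal.coe_tsum h.summable, h.tsum_eq, sum_range_succ, ← pow_succ]
    push_cast
    rfl
  rw [eulerSum, ENNReal.tsum_comm]
  simp only [inner, ENNReal.tsum_add, zetaTwoOne, zetaThree]

theorem zetaTwoOne_ne_top : zetaTwoOne ≠ ∞ := by
  set a : ℕ → ℝ≥0 := fun n => (((n : ℝ≥0) + 1) ^ (3 / 2 : ℝ))⁻¹
  have ha : Summable a := by
    have h := (NNReal.summable_rpow_inv (p := 3 / 2)).2 (by norm_num)
    refine ((NNReal.summable_nat_add_iff 1).2 h).congr fun n => ?_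
    simp [a]
  have bound : zetaTwoOne ≤ (∑' n, (a n : ℝ≥0∞)) * ∑' i, (a i : ℝ≥0∞) := by
    rw [zetaTwoOne, ← ENNReal.tsum_mul_right]
    refine ENNReal.tsum_le_tsum fun n => ?_
    rw [← ENNReal.tsum_mul_left]
    refine (sum_le_sum fun i hi => ?_).trans (ENNReal.sum_le_tsum _)
    rw [← ENNReal.coe_mul, ENNReal.coe_le_coe, ← mul_inv]
    refine inv_anti₀ (by positivity) (NNReal.rpow_three_halves_mul_le ?_)
    simpa using (mem_range.1 hi).le
  have hfin := ENNReal.tsum_coe_ne_top_iff_summable.2 ha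
  exact ne_top_of_le_ne_top (ENNReal.mul_ne_top hfin hfin) bound

theorem zetaTwoOne_eq_zetaThree : zetaTwoOne = zetaThree :=
  (ENNReal.add_right_inj zetaTwoOne_ne_top).1
    (eulerSum_eq_zetaTwoOne_add_zetaTwoOne.symm.trans eulerSum_eq_zetaTwoOne_add_zetaThree)

theorem zetaTwoOne_eq_tsum_tsum_ite : zetaTwoOne = ∑' k : ℕ, ∑' l : ℕ,
    ((if 1 ≤ l ∧ l < k then ((k : ℝ≥0) ^ 2 * l)⁻¹ else 0 : ℝ≥0) : ℝ≥0∞) := by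
  rw [tsum_eq_zero_add' ENNReal.summable]
  simp only [Nat.not_lt_zero, and_false, if_false, ENNReal.coe_zero, tsum_zero, zero_add]
  refine tsum_congr fun n => ?_
  rw [tsum_eq_zero_add' ENNReal.summable, ← tsum_ite_lt_eq_sum_range]
  simp only [Nat.le_zero, one_ne_zero, false_and, if_false, ENNReal.coe_zero, zero_add,
    Nat.le_add_left, true_and, add_lt_add_iff_right]
  refine tsum_congr fun i => ?_
  split_ifs <;> push_cast <;> rfl

theorem zetaTwoOne_toReal : zetaTwoOne.toReal
    = ∑' k : ℕ, ∑' l : ℕ, if 1 ≤ l ∧ l < k then ((k : ℝ) ^ 2 * (l : ℝ))⁻¹ else 0 := by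
  have h := zetaTwoOne_eq_tsum_tsum_ite
  rw [h, ENNReal.toReal_tsum_tsum_coe (h ▸ zetaTwoOne_ne_top)]
  refine tsum_congr fun k => tsum_congr fun l => ?_
  split_ifs <;> push_cast <;> rfl

theorem zetaThree_toReal : zetaThree.toReal = ∑' k : ℕ, (((k : ℝ) + 1) ^ 3)⁻¹ := by
  rw [zetaThree, ENNReal.tsum_toReal_eq fun _ => ENNReal.coe_ne_top]
  push_cast [ENNReal.coe_toReal]
  rfl

/-- ζ(2,1) = ζ(3): ∑_{k>l≥1} 1/(k²·l) = ∑_{k≥1} 1/k³. -/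
theorem zeta_two_one_eq_zeta_three :
    (∑' k : ℕ, ∑' l : ℕ, if 1 ≤ l ∧ l < k then ((k : ℝ) ^ 2 * (l : ℝ))⁻¹ else 0)
      = ∑' k : ℕ, (((k : ℝ) + 1) ^ 3)⁻¹ := by
  rw [← zetaTwoOne_toReal, ← zetaThree_toReal, zetaTwoOne_eq_zetaThree]
end

section
/- Define a_n(t) by a₁(t)=a₂(t)=1 and n(n+1)²·a_{n+2}(t) = n(2n+1)·a_{n+1}(t) + (n³+(−1)^{n+1}t)·a_n(t) for n≥1. Then the sequence ã_n(t) = 1 + Σ_{i≥1} t^i · Σ_{n>l₁>k₁>...>l_i>k_i≥1} (−1)^{l₁+...+l_i}/(l₁²k₁···l_i²k_i) satisfies the same initial conditions and recursion, hence a_n(t)=ã_n(t) for all n≥1. -/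
/-
Write `c i n` for the inner sum of `ã` over chains `n > l₁ > k₁ > ⋯ > lᵢ > kᵢ ≥ 1`. Splitting off
the first link gives `c (i+1) n = ∑_{l<n} (-1)^l / l² ∑_{1≤k<l} c i k / k`, so the first difference
of `c (i+1)` is `(-1)^n / n²` times a partial sum whose own difference is `c i n / n`. Eliminating
that partial sum between two consecutive differences yields
`n(n+1)² c (i+1) (n+2) = n(2n+1) c (i+1) (n+1) + n³ c (i+1) n + (-1)^(n+1) c i n`,
and weighting by `t^(i+1)` and summing over `i` (finitely many terms, as `c i n = 0` for
`0 < i`, `n ≤ 2i`) gives the recursion for `ã`; the `i = 0` term is `n(n+1)² = n(2n+1) + n³`.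
-/

/-- ã_n(t) = 1 + ∑_{i≥1} t^i ∑_{n>l₁>k₁>...>l_i>k_i≥1} (−1)^{l₁+⋯+l_i}/(l₁²k₁⋯l_i²k_i).
For each fixed n only finitely many terms are nonzero. -/
noncomputable def atilde (t : ℝ) (n : ℕ) : ℝ :=
  1 + ∑' i : ℕ, t ^ (i + 1) *
    ∑' p : (Fin (i + 1) → ℕ) × (Fin (i + 1) → ℕ),
      if p.1 0 < n ∧ (∀ j, p.2 j < p.1 j)
          ∧ (∀ j j' : Fin (i + 1), (j' : ℕ) = (j : ℕ) + 1 → p.1 j' < p.2 j)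
          ∧ (∀ j, 1 ≤ p.2 j) then
        ∏ j, (-1 : ℝ) ^ (p.1 j) * ((p.1 j : ℝ) ^ 2 * (p.2 j : ℝ))⁻¹
      else 0

open Finset

/-- `n > l 0 > k 0 > l 1 > k 1 > ⋯ ≥ 1`, with the condition `l 0 < n` phrased so that it also
makes sense for `m = 0`. -/
def IsChainBelow (n : ℕ) {m : ℕ} (l k : Fin m → ℕ) : Prop :=
  (∀ j : Fin m, (j : ℕ) = 0 → l j < n) ∧ (∀ j, k j < l j) ∧
    (∀ j j' : Fin m, (j' : ℕ) = j + 1 → l j' < k j) ∧ ∀ j, 1 ≤ k j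

instance (n : ℕ) {m : ℕ} (l k : Fin m → ℕ) : Decidable (IsChainBelow n l k) := by
  unfold IsChainBelow; infer_instance

theorem isChainBelow_cons {n m l k : ℕ} {a b : Fin m → ℕ} :
    IsChainBelow n (Fin.cons l a : Fin (m + 1) → ℕ) (Fin.cons k b) ↔
      (l < n ∧ k < l ∧ 1 ≤ k) ∧ IsChainBelow k a b := by
  simp only [IsChainBelow, Fin.val_eq_zero_iff, forall_eq, Fin.cons_zero, Fin.forall_fin_succ,
    Fin.cons_succ, Fin.coe_ofNat_eq_mod, Nat.zero_mod, Nat.right_eq_add, Nat.add_eq_zero_iff,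
    one_ne_zero, and_false, IsEmpty.forall_iff, Fin.val_succ, Nat.add_right_cancel_iff, true_and]
  tauto

theorem IsChainBelow.lt {n m : ℕ} {l k : Fin m → ℕ} (h : IsChainBelow n l k) (j : Fin m) :
    l j < n := by
  induction m generalizing n with
  | zero => exact j.elim0
  | succ m ih =>
    rw [← Fin.cons_self_tail l, ← Fin.cons_self_tail k, isChainBelow_cons] at h
    obtain ⟨⟨hl, hk, -⟩, htail⟩ := h
    rcases Fin.eq_zero_or_eq_succ j with rfl | ⟨j, rfl⟩
    · exact hl
    · exact (ih htail j).trans (hk.trans hl)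

noncomputable def chainWeight (n : ℕ) {m : ℕ} (p : (Fin m → ℕ) × (Fin m → ℕ)) : ℝ :=
  if IsChainBelow n p.1 p.2 then ∏ j, (-1 : ℝ) ^ (p.1 j) * ((p.1 j : ℝ) ^ 2 * (p.2 j : ℝ))⁻¹
  else 0

noncomputable def chainSum (m n : ℕ) : ℝ := ∑' p : (Fin m → ℕ) × (Fin m → ℕ), chainWeight n p

theorem atilde_eq_one_add_tsum (t : ℝ) (n : ℕ) :
    atilde t n = 1 + ∑' i : ℕ, t ^ (i + 1) * chainSum (i + 1) n := by
  have head_iff (i : ℕ) (l : Fin (i + 1) → ℕ) :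
      l 0 < n ↔ ∀ j : Fin (i + 1), (j : ℕ) = 0 → l j < n :=
    ⟨fun h j hj => Fin.val_eq_zero_iff.1 hj ▸ h, fun h => h 0 rfl⟩
  simp only [atilde, chainSum, chainWeight, IsChainBelow, head_iff]

def pairBox (m N : ℕ) : Finset ((Fin m → ℕ) × (Fin m → ℕ)) :=
  Fintype.piFinset (fun _ => range N) ×ˢ Fintype.piFinset (fun _ => range N)

theorem chainWeight_eq_zero_of_notMem {m n N : ℕ} (hn : n ≤ N) {p : (Fin m → ℕ) × (Fin m → ℕ)}
    (hp : p ∉ pairBox m N) : chainWeight n p = 0 := by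
  refine if_neg fun h => hp ?_
  simp only [pairBox, mem_product, Fintype.mem_piFinset, mem_range]
  exact ⟨fun j => (h.lt j).trans_le hn, fun j => ((h.2.1 j).trans (h.lt j)).trans_le hn⟩

theorem chainSum_eq_sum {m n N : ℕ} (hn : n ≤ N) :
    chainSum m n = ∑ p ∈ pairBox m N, chainWeight n p :=
  tsum_eq_sum fun _ => chainWeight_eq_zero_of_notMem hn

theorem chainSum_zero (n : ℕ) : chainSum 0 n = 1 := by
  rw [chainSum, tsum_fintype, Fintype.sum_subsingleton _ (Fin.elim0, Fin.elim0)]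
  simp [chainWeight, IsChainBelow]

def consPairEquiv (m : ℕ) :
    (ℕ × ℕ) × (Fin m → ℕ) × (Fin m → ℕ) ≃ (Fin (m + 1) → ℕ) × (Fin (m + 1) → ℕ) :=
  (Equiv.prodProdProdComm ℕ ℕ _ _).trans
    ((Fin.consEquiv fun _ => ℕ).prodCongr (Fin.consEquiv fun _ => ℕ))

theorem chainWeight_consPairEquiv (n : ℕ) {m : ℕ} (x : ℕ × ℕ)
    (p : (Fin m → ℕ) × (Fin m → ℕ)) :
    chainWeight n (consPairEquiv m (x, p)) =
      if x.1 < n ∧ x.2 < x.1 ∧ 1 ≤ x.2 then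
        (-1 : ℝ) ^ x.1 * ((x.1 : ℝ) ^ 2 * x.2)⁻¹ * chainWeight x.2 p
      else 0 := by
  change chainWeight n (Fin.cons x.1 p.1, Fin.cons x.2 p.2) = _
  simp only [chainWeight, isChainBelow_cons, Fin.prod_univ_succ, Fin.cons_zero, Fin.cons_succ]
  split_ifs <;> simp_all

theorem chainSum_succ (m n : ℕ) :
    chainSum (m + 1) n =
      ∑ l ∈ range n, (-1 : ℝ) ^ l / (l : ℝ) ^ 2 * ∑ k ∈ Ico 1 l, chainSum m k / k := by
  set IsHead : ℕ × ℕ → Prop := fun x => x.1 < n ∧ x.2 < x.1 ∧ 1 ≤ x.2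
  have mem_heads (x : ℕ × ℕ) :
      x ∈ (range n ×ˢ range n).filter IsHead ↔ x.1 ∈ range n ∧ x.2 ∈ Ico 1 x.1 := by
    simp only [IsHead, mem_filter, mem_product, mem_range, mem_Ico]
    omega
  calc chainSum (m + 1) n
      = ∑' q, chainWeight n (consPairEquiv m q) := ((consPairEquiv m).tsum_eq _).symm
    _ = ∑ q ∈ (range n ×ˢ range n) ×ˢ pairBox m n, chainWeight n (consPairEquiv m q) := by
        refine tsum_eq_sum fun ⟨x, p⟩ hq => ?_
        rw [chainWeight_consPairEquiv]
        split_ifs with h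
        · refine mul_eq_zero_of_right _ (chainWeight_eq_zero_of_notMem (N := n) (by omega) ?_)
          exact fun hp => hq (mem_product.2 ⟨by simp only [mem_product, mem_range]; omega, hp⟩)
        · rfl
    _ = ∑ x ∈ range n ×ˢ range n,
          if IsHead x then (-1 : ℝ) ^ x.1 * ((x.1 : ℝ) ^ 2 * x.2)⁻¹ * chainSum m x.2 else 0 := by
        rw [sum_product]
        refine sum_congr rfl fun x hx => ?_
        simp only [chainWeight_consPairEquiv]
        split_ifs
        · have hxn : x.2 ≤ n := by simp only [mem_product, mem_range] at hx; omega
          rw [chainSum_eq_sum hxn, mul_sum]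
        · exact sum_const_zero
    _ = ∑ l ∈ range n, ∑ k ∈ Ico 1 l, (-1 : ℝ) ^ l * ((l : ℝ) ^ 2 * k)⁻¹ * chainSum m k := by
        rw [← sum_filter]
        exact sum_finset_product' _ _ _ mem_heads
          (f := fun l k => (-1 : ℝ) ^ l * ((l : ℝ) ^ 2 * k)⁻¹ * chainSum m k)
    _ = _ := by
        simp only [mul_sum]
        exact sum_congr rfl fun l _ => sum_congr rfl fun k _ => by ring

theorem chainSum_succ_eq_zero_of_le {m n : ℕ} (h : n ≤ 2 * m + 2) : chainSum (m + 1) n = 0 := by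
  induction m generalizing n with
  | zero =>
    refine (chainSum_succ 0 n).trans (sum_eq_zero fun l hl => ?_)
    rw [Ico_eq_empty (by simp only [mem_range] at hl; omega), sum_empty, mul_zero]
  | succ m ih =>
    refine (chainSum_succ _ n).trans (sum_eq_zero fun l hl => ?_)
    refine mul_eq_zero_of_right _ (sum_eq_zero fun k hk => ?_)
    simp only [mem_range, mem_Ico] at hl hk
    rw [ih (by omega), zero_div]

theorem chainSum_succ_recurrence (m : ℕ) {n : ℕ} (hn : 1 ≤ n) :
    (n : ℝ) * ((n : ℝ) + 1) ^ 2 * chainSum (m + 1) (n + 2) =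
      (n : ℝ) * (2 * (n : ℝ) + 1) * chainSum (m + 1) (n + 1) +
        (n : ℝ) ^ 3 * chainSum (m + 1) n + (-1 : ℝ) ^ (n + 1) * chainSum m n := by
  have hn' : (n : ℝ) ≠ 0 := Nat.cast_ne_zero.2 (by omega)
  simp only [chainSum_succ m, sum_range_succ, sum_Ico_succ_top hn]
  push_cast
  field_simp
  ring

theorem atilde_eq_sum (t : ℝ) {n N : ℕ} (h : n ≤ 2 * N + 2) :
    atilde t n = 1 + ∑ i ∈ range N, t ^ (i + 1) * chainSum (i + 1) n := by
  rw [atilde_eq_one_add_tsum]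
  congr 1
  refine tsum_eq_sum fun i hi => ?_
  rw [chainSum_succ_eq_zero_of_le (by simp only [mem_range] at hi; omega), mul_zero]

theorem mul_atilde_eq_sum (t : ℝ) (n : ℕ) :
    t * atilde t n = ∑ i ∈ range (n + 1), t ^ (i + 1) * chainSum i n := by
  rw [atilde_eq_sum t (N := n) (by omega), sum_range_succ', chainSum_zero, mul_add, mul_sum]
  simp only [pow_succ]
  ring_nf

theorem atilde_one (t : ℝ) : atilde t 1 = 1 := by
  simp [atilde_eq_sum t (N := 0) (n := 1) (by omega)]

theorem atilde_two (t : ℝ) : atilde t 2 = 1 := by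
  simp [atilde_eq_sum t (N := 0) (n := 2) (by omega)]

theorem atilde_recurrence (t : ℝ) {n : ℕ} (hn : 1 ≤ n) :
    (n : ℝ) * ((n : ℝ) + 1) ^ 2 * atilde t (n + 2)
      = (n : ℝ) * (2 * (n : ℝ) + 1) * atilde t (n + 1)
        + ((n : ℝ) ^ 3 + (-1 : ℝ) ^ (n + 1) * t) * atilde t n := by
  have hsum :
      (n : ℝ) * ((n : ℝ) + 1) ^ 2 * ∑ i ∈ range (n + 1), t ^ (i + 1) * chainSum (i + 1) (n + 2) =
      (n : ℝ) * (2 * (n : ℝ) + 1) * ∑ i ∈ range (n + 1), t ^ (i + 1) * chainSum (i + 1) (n + 1) +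
        (n : ℝ) ^ 3 * ∑ i ∈ range (n + 1), t ^ (i + 1) * chainSum (i + 1) n +
        (-1 : ℝ) ^ (n + 1) * ∑ i ∈ range (n + 1), t ^ (i + 1) * chainSum i n := by
    simp only [mul_sum, ← sum_add_distrib]
    exact sum_congr rfl fun i _ => by
      linear_combination t ^ (i + 1) * chainSum_succ_recurrence i hn
  linear_combination hsum
    + (n : ℝ) * ((n : ℝ) + 1) ^ 2 * atilde_eq_sum t (n := n + 2) (N := n + 1) (by omega)
    - (n : ℝ) * (2 * (n : ℝ) + 1) * atilde_eq_sum t (n := n + 1) (N := n + 1) (by omega)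
    - (n : ℝ) ^ 3 * atilde_eq_sum t (n := n) (N := n + 1) (by omega)
    - (-1 : ℝ) ^ (n + 1) * mul_atilde_eq_sum t n

theorem eq_of_three_term_recurrence {R : Type*} [Ring R] [NoZeroDivisors R]
    {a b p q r : ℕ → R}
    (hp : ∀ n, 1 ≤ n → p n ≠ 0)
    (ha : ∀ n, 1 ≤ n → p n * a (n + 2) = q n * a (n + 1) + r n * a n)
    (hb : ∀ n, 1 ≤ n → p n * b (n + 2) = q n * b (n + 1) + r n * b n)
    (h1 : a 1 = b 1) (h2 : a 2 = b 2) {n : ℕ} (hn : 1 ≤ n) : a n = b n := by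
  have pair (n : ℕ) : a (n + 1) = b (n + 1) ∧ a (n + 2) = b (n + 2) := by
    induction n with
    | zero => exact ⟨h1, h2⟩
    | succ n ih =>
      refine ⟨ih.2, mul_left_cancel₀ (hp (n + 1) (by omega)) ?_⟩
      rw [ha _ (by omega), hb _ (by omega), ih.1, ih.2]
  obtain ⟨n, rfl⟩ := Nat.exists_eq_add_of_le' hn
  exact (pair n).1

/-- The sequence ã_n(t) satisfies ã₁ = ã₂ = 1 and the recursion
n(n+1)²a_{n+2} = n(2n+1)a_{n+1} + (n³+(−1)^{n+1}t)a_n; hence any sequence a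
satisfying these initial conditions and this recursion equals ã. -/
theorem atilde_satisfies_recursion (t : ℝ) (a : ℕ → ℝ)
    (h1 : a 1 = 1) (h2 : a 2 = 1)
    (hrec : ∀ n : ℕ, 1 ≤ n →
      (n : ℝ) * ((n : ℝ) + 1) ^ 2 * a (n + 2)
        = (n : ℝ) * (2 * (n : ℝ) + 1) * a (n + 1)
          + ((n : ℝ) ^ 3 + (-1 : ℝ) ^ (n + 1) * t) * a n) :
    (atilde t 1 = 1 ∧ atilde t 2 = 1 ∧
      ∀ n : ℕ, 1 ≤ n →
        (n : ℝ) * ((n : ℝ) + 1) ^ 2 * atilde t (n + 2)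
          = (n : ℝ) * (2 * (n : ℝ) + 1) * atilde t (n + 1)
            + ((n : ℝ) ^ 3 + (-1 : ℝ) ^ (n + 1) * t) * atilde t n)
    ∧ ∀ n : ℕ, 1 ≤ n → a n = atilde t n :=
  ⟨⟨atilde_one t, atilde_two t, fun _ => atilde_recurrence t⟩,
    fun _ => eq_of_three_term_recurrence (fun n hn => by positivity) hrec
      (fun _ => atilde_recurrence t) (h1.trans (atilde_one t).symm) (h2.trans (atilde_two t).symm)⟩
end
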